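/- arXiv:1806.08519 — 2 statements merged into one kernel-verified Lean document; each statement's English description precedes it below -/
import Mathlib

section
/- The category Rec has parameterized list objects: for every object A ⊆ ℕ, the subset List(A) := {n ∈ ℕ : for all i < lh(n), (n)_i ∈ A}, together with the empty-list morphism {0} → List(A) sending 0 to the code of the empty list and the append morphism cons : List(A) × A → List(A) sending ⟨l,a⟩ to cnc(l,a), satisfies: for all objects P, B of Rec and all morphisms f : P → B and g : B × A → B of Rec there is a unique morphism h : P × List(A) → B of Rec with h(⟨p, empty⟩) = f(p) and h(⟨p, cnc(l,a)⟩) = g(⟨h(⟨p,l⟩), a⟩) for all p ∈ P, l ∈ List(A), a ∈ A. -/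
open CategoryTheory

namespace RecPaper

/-- Kleene application `{e}(n)`: apply the partial recursive function with Gödel code `e`
to the input `n`. -/
def kap (e n : ℕ) : Part ℕ :=
  Nat.Partrec.Code.eval (Denumerable.ofNat Nat.Partrec.Code e) n

/-- The type of objects of the category `Rec`: subsets of `ℕ`. -/
def RecCat : Type := Set ℕ

/-- The underlying subset of `ℕ` of an object of `Rec`. -/
def RecCat.carrier (A : RecCat) : Set ℕ := A

/-- View a subset of `ℕ` as an object of `Rec`. -/
def RecCat.ofSet (A : Set ℕ) : RecCat := A

instance : CoeSort RecCat Type := ⟨fun A => {n : ℕ // n ∈ A.carrier}⟩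

/-- A function between subsets of `ℕ` is *tracked* if there is a partial recursive
function, defined on the whole domain, whose restriction to the domain is the given
function. -/
def Tracked {A B : RecCat} (f : A → B) : Prop :=
  ∃ g : ℕ →. ℕ, Nat.Partrec g ∧ ∀ a : A, g a.val = Part.some (f a).val

/-- The category `Rec` of subsets of `ℕ` and restrictions of partial recursive functions. -/
instance : Category RecCat where
  Hom A B := {f : A → B // Tracked f}
  id A := ⟨fun a => a, (fun n => n : ℕ → ℕ), Nat.Partrec.of_primrec Nat.Primrec.id,
    fun _ => rfl⟩
  comp {A B C} f g := ⟨fun a => g.1 (f.1 a), by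
    obtain ⟨u, pu, hu⟩ := f.2
    obtain ⟨v, pv, hv⟩ := g.2
    refine ⟨fun n => u n >>= v, pv.comp pu, fun a => ?_⟩
    exact (congrArg (fun x => Part.bind x v) (hu a)).trans ((Part.bind_some _ _).trans (hv (f.1 a)))⟩
  id_comp _ := rfl
  comp_id _ := rfl
  assoc _ _ _ := rfl

/-- The underlying function of a morphism of `Rec`. -/
def hfun {A B : RecCat} (f : A ⟶ B) : A → B := f.1

/-- The value of a morphism of `Rec` on an element, as a natural number. -/
def happ {A B : RecCat} (f : A ⟶ B) (a : A) : ℕ := (hfun f a).val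


/-- The product set `{⟨a,b⟩ : a ∈ A, b ∈ B}`. -/
def prodSet (A B : Set ℕ) : Set ℕ := {n | ∃ a ∈ A, ∃ b ∈ B, n = Nat.pair a b}

/-- The length `lh(n)` of the finite list coded by `n`. -/
def lh (n : ℕ) : ℕ := (Denumerable.ofNat (List ℕ) n).length

/-- The `i`-th component `(n)_i` of the finite list coded by `n`. -/
def nthEl (n i : ℕ) : ℕ := (Denumerable.ofNat (List ℕ) n).getD i 0

/-- The code of the empty list. -/
def emptyCode : ℕ := Encodable.encode ([] : List ℕ)

/-- The concatenation function `cnc(l,a)` appending one element to the list coded by `l`. -/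
def cnc (l a : ℕ) : ℕ := Encodable.encode (Denumerable.ofNat (List ℕ) l ++ [a])

/-- The set `List(A)` of codes of finite lists of elements of `A`. -/
def listSet (A : Set ℕ) : Set ℕ := {n | ∀ i < lh n, nthEl n i ∈ A}

/-!
The mediating morphism is forced by the two equations: on `⟨p, l⟩` it must fold `g` along the
list coded by `l`, starting from `f p`, so uniqueness is induction on lists built by appending.
It is a morphism of `Rec` because folding a partial recursive step along a list is again
partial recursive: it is a primitive recursion over the length of the list.
-/

theorem _root_.Part.foldl_bind_some {σ β : Type*} {s : σ → β → Part σ} {t : σ → β → σ}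
    {S : Set σ} {L : List β} (hs : ∀ x ∈ S, ∀ b ∈ L, s x b = Part.some (t x b))
    (hS : ∀ x ∈ S, ∀ b ∈ L, t x b ∈ S) {x : σ} (hx : x ∈ S) :
    L.foldl (fun p b => p.bind (s · b)) (Part.some x) = Part.some (L.foldl t x) := by
  induction L generalizing x with
  | nil => rfl
  | cons b L ih =>
    simp only [List.foldl_cons, Part.bind_some, hs x hx b List.mem_cons_self]
    exact ih (fun y hy c hc => hs y hy c (List.mem_cons_of_mem b hc))
      (fun y hy c hc => hS y hy c (List.mem_cons_of_mem b hc))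
      (hS x hx b List.mem_cons_self)

theorem _root_.Partrec.list_foldl_bind {α β σ : Type*} [Primcodable α] [Primcodable β]
    [Primcodable σ] {f : α → List β} {g : α →. σ} {h : α → σ × β →. σ}
    (hf : Computable f) (hg : Partrec g) (hh : Partrec₂ h) :
    Partrec fun a => (f a).foldl (fun s b => s.bind fun x => h a (x, b)) (g a) := by
  let step (a : α) (kx : ℕ × σ) : Part σ :=
    Option.casesOn (f a)[kx.1]? (Part.some kx.2) fun b => h a (kx.2, b)
  have hstep : Partrec₂ step :=
    Partrec.optionCasesOn_right (Computable.list_getElem?.comp (hf.comp Computable.fst)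
      (Computable.fst.comp Computable.snd)) (Computable.snd.comp Computable.snd)
      (hh.comp (Computable.fst.comp Computable.fst)
        (Computable.pair (Computable.snd.comp (Computable.snd.comp Computable.fst))
          Computable.snd)).to₂
  refine (Partrec.nat_rec (Computable.list_length.comp hf) hg hstep).of_eq fun a => ?_
  -- after `k` steps the recursion has folded the prefix of length `k`
  suffices ∀ k ≤ (f a).length, Nat.rec (g a) (fun y IH => IH.bind fun i => step a (y, i)) k =
      ((f a).take k).foldl (fun s b => s.bind fun x => h a (x, b)) (g a) by
    simpa using this _ le_rfl
  intro k hk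
  induction k with
  | zero => rfl
  | succ k ih =>
    have hk' : k < (f a).length := hk
    rw [← List.take_concat_get' _ _ hk', List.foldl_append, ← ih hk'.le]
    simp [step, List.getElem?_eq_getElem hk']

open Denumerable Encodable

lemma ofNat_emptyCode : ofNat (List ℕ) emptyCode = [] := ofNat_encode _

lemma ofNat_cnc (l a : ℕ) : ofNat (List ℕ) (cnc l a) = ofNat (List ℕ) l ++ [a] :=
  ofNat_encode _

lemma cnc_encode (L : List ℕ) (a : ℕ) : cnc (encode L) a = encode (L ++ [a]) := by
  rw [cnc, ofNat_encode]

lemma primrec₂_cnc : Primrec₂ cnc :=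
  Primrec.encode.comp₂ <|
    Primrec.list_concat.comp₂ ((Primrec.ofNat (List ℕ)).comp₂ .left) .right

lemma mem_listSet_iff {A : Set ℕ} {n : ℕ} :
    n ∈ listSet A ↔ ∀ a ∈ ofNat (List ℕ) n, a ∈ A := by
  simp only [listSet, lh, nthEl, List.forall_mem_iff_getElem]
  refine forall₂_congr fun i hi => ?_
  rw [List.getD_eq_getElem _ _ hi]

lemma encode_mem_listSet_iff {A : Set ℕ} {L : List ℕ} :
    encode L ∈ listSet A ↔ ∀ a ∈ L, a ∈ A := by
  rw [mem_listSet_iff, ofNat_encode]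

lemma emptyCode_mem_listSet (A : Set ℕ) : emptyCode ∈ listSet A :=
  encode_mem_listSet_iff.2 fun _ h => absurd h List.not_mem_nil

lemma cnc_mem_listSet {A : Set ℕ} {l a : ℕ} (hl : l ∈ listSet A) (ha : a ∈ A) :
    cnc l a ∈ listSet A := by
  rw [mem_listSet_iff, ofNat_cnc]
  simpa [or_imp, forall_and, ha] using mem_listSet_iff.1 hl

lemma pair_mem_prodSet_iff {S T : Set ℕ} {a b : ℕ} :
    Nat.pair a b ∈ prodSet S T ↔ a ∈ S ∧ b ∈ T := by
  simp [prodSet]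

lemma unpair_mem_of_mem_prodSet {S T : Set ℕ} {n : ℕ} (h : n ∈ prodSet S T) :
    n.unpair.1 ∈ S ∧ n.unpair.2 ∈ T := by
  rwa [← pair_mem_prodSet_iff, Nat.pair_unpair]

lemma Tracked.of_computable {X Y : RecCat} {f : X → Y} {F : ℕ → ℕ} (hF : Computable F)
    (h : ∀ x, (f x).val = F x.val) : Tracked f :=
  ⟨F, Partrec.nat_iff.1 hF.partrec, fun x => by simp [h]⟩

section Hom

variable {X Y : RecCat} (f : X ⟶ Y)

open Classical in
/-- A morphism of `Rec` as a function on all of `ℕ`, with junk value `0` off its domain. -/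
noncomputable def extend (n : ℕ) : ℕ :=
  if h : n ∈ X.carrier then happ f ⟨n, h⟩ else 0

lemma extend_val (x : X) : extend f x.val = happ f x := by
  rw [extend, dif_pos x.2]

lemma extend_mem {n : ℕ} (h : n ∈ X.carrier) : extend f n ∈ Y.carrier :=
  extend_val f ⟨n, h⟩ ▸ (hfun f ⟨n, h⟩).2

lemma exists_partrec_eq_extend :
    ∃ u : ℕ →. ℕ, Partrec u ∧ ∀ n ∈ X.carrier, u n = Part.some (extend f n) := by
  obtain ⟨u, hu, hf⟩ := f.2
  exact ⟨u, Partrec.nat_iff.2 hu, fun n hn =>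
    (hf ⟨n, hn⟩).trans (congrArg Part.some (extend_val f ⟨n, hn⟩).symm)⟩

end Hom

def emptyHom (A : RecCat) : RecCat.ofSet {0} ⟶ RecCat.ofSet (listSet A.carrier) :=
  ⟨fun _ => ⟨emptyCode, emptyCode_mem_listSet _⟩,
    .of_computable (Computable.const _) fun _ => rfl⟩

def consHom (A : RecCat) :
    RecCat.ofSet (prodSet (listSet A.carrier) A.carrier) ⟶ RecCat.ofSet (listSet A.carrier) :=
  ⟨fun x => ⟨cnc x.val.unpair.1 x.val.unpair.2,
      cnc_mem_listSet (unpair_mem_of_mem_prodSet x.2).1 (unpair_mem_of_mem_prodSet x.2).2⟩,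
    .of_computable
      (primrec₂_cnc.comp (Primrec.fst.comp .unpair) (Primrec.snd.comp .unpair)).to_comp
      fun _ => rfl⟩

section ListRec

variable {A B P : RecCat} (f : P ⟶ B) (g : RecCat.ofSet (prodSet B.carrier A.carrier) ⟶ B)

noncomputable def listRec (p : ℕ) (L : List ℕ) : ℕ :=
  L.foldl (fun b a => extend g (Nat.pair b a)) (extend f p)

@[simp] lemma listRec_nil (p : ℕ) : listRec f g p [] = extend f p := rfl

@[simp] lemma listRec_append_singleton (p : ℕ) (L : List ℕ) (a : ℕ) :
    listRec f g p (L ++ [a]) = extend g (Nat.pair (listRec f g p L) a) :=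
  List.foldl_append ..

lemma listRec_mem {p : ℕ} (hp : p ∈ P.carrier) {L : List ℕ} (hL : ∀ a ∈ L, a ∈ A.carrier) :
    listRec f g p L ∈ B.carrier := by
  induction L using List.reverseRecOn with
  | nil => exact extend_mem f hp
  | append_singleton L a ih =>
    rw [listRec_append_singleton]
    exact extend_mem g (pair_mem_prodSet_iff.2
      ⟨ih fun b hb => hL b (List.mem_append_left _ hb), hL a (by simp)⟩)

lemma exists_partrec_eq_listRec :
    ∃ r : ℕ →. ℕ, Partrec r ∧ ∀ n ∈ prodSet P.carrier (listSet A.carrier),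
      r n = Part.some (listRec f g n.unpair.1 (ofNat (List ℕ) n.unpair.2)) := by
  obtain ⟨u, hu, hfu⟩ := exists_partrec_eq_extend f
  obtain ⟨v, hv, hgv⟩ := exists_partrec_eq_extend g
  refine ⟨_, Partrec.list_foldl_bind (h := fun _ ba => v (Nat.pair ba.1 ba.2))
    ((Computable.ofNat (List ℕ)).comp (Computable.snd.comp .unpair))
    (hu.comp (Computable.fst.comp .unpair))
    (hv.comp (Primrec₂.natPair.comp (Primrec.fst.comp .snd)
      (Primrec.snd.comp .snd)).to_comp).to₂,
    fun n hn => ?_⟩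
  obtain ⟨hp, hl⟩ := unpair_mem_of_mem_prodSet hn
  simp only [hfu _ hp, listRec]
  exact Part.foldl_bind_some (S := B.carrier)
    (fun b hb a ha => hgv _ (pair_mem_prodSet_iff.2 ⟨hb, mem_listSet_iff.1 hl a ha⟩))
    (fun b hb a ha => extend_mem g (pair_mem_prodSet_iff.2 ⟨hb, mem_listSet_iff.1 hl a ha⟩))
    (extend_mem f hp)

noncomputable def listRecHom : RecCat.ofSet (prodSet P.carrier (listSet A.carrier)) ⟶ B :=
  ⟨fun x => ⟨listRec f g x.val.unpair.1 (ofNat (List ℕ) x.val.unpair.2),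
      listRec_mem f g (unpair_mem_of_mem_prodSet x.2).1
        (mem_listSet_iff.1 (unpair_mem_of_mem_prodSet x.2).2)⟩,
    by
      obtain ⟨r, hr, hrf⟩ := exists_partrec_eq_listRec f g
      exact ⟨r, Partrec.nat_iff.1 hr, fun x => hrf x.val x.2⟩⟩

lemma happ_listRecHom (x : RecCat.ofSet (prodSet P.carrier (listSet A.carrier))) :
    happ (listRecHom f g) x = listRec f g x.val.unpair.1 (ofNat (List ℕ) x.val.unpair.2) :=
  rfl

def IsListRec (h : RecCat.ofSet (prodSet P.carrier (listSet A.carrier)) ⟶ B) : Prop :=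
  (∀ (x : RecCat.ofSet (prodSet P.carrier (listSet A.carrier))) (p : P),
    x.val = Nat.pair p.val emptyCode → happ h x = happ f p) ∧
  (∀ (x y : RecCat.ofSet (prodSet P.carrier (listSet A.carrier)))
     (z : RecCat.ofSet (prodSet B.carrier A.carrier)) (p l a : ℕ),
    x.val = Nat.pair p (cnc l a) → y.val = Nat.pair p l →
    z.val = Nat.pair (happ h y) a → happ h x = happ g z)

lemma isListRec_listRecHom : IsListRec f g (listRecHom f g) := by
  constructor
  · intro x p hx
    rw [happ_listRecHom, hx, Nat.unpair_pair, ofNat_emptyCode, listRec_nil, extend_val]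
  · intro x y z p l a hx hy hz
    rw [happ_listRecHom, hy, Nat.unpair_pair] at hz
    rw [happ_listRecHom, hx, Nat.unpair_pair, ofNat_cnc, listRec_append_singleton, ← hz,
      extend_val]

lemma IsListRec.eq_listRecHom {h : RecCat.ofSet (prodSet P.carrier (listSet A.carrier)) ⟶ B}
    (hh : IsListRec f g h) : h = listRecHom f g := by
  suffices ∀ L : List ℕ, ∀ x : RecCat.ofSet (prodSet P.carrier (listSet A.carrier)),
      x.val = Nat.pair x.val.unpair.1 (encode L) → happ h x = listRec f g x.val.unpair.1 L by
    refine Subtype.ext (funext fun x => Subtype.ext ?_)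
    exact (this _ x (by rw [encode_ofNat, Nat.pair_unpair])).trans (happ_listRecHom f g x).symm
  intro L
  induction L using List.reverseRecOn with
  | nil =>
    intro x hx
    rw [hh.1 x ⟨_, (unpair_mem_of_mem_prodSet x.2).1⟩ hx, listRec_nil, ← extend_val]
  | append_singleton L a ih =>
    intro x hx
    obtain ⟨hp, hl⟩ := pair_mem_prodSet_iff.1 (hx ▸ x.2)
    have hL := encode_mem_listSet_iff.1 hl
    let y : RecCat.ofSet (prodSet P.carrier (listSet A.carrier)) :=
      ⟨Nat.pair x.val.unpair.1 (encode L),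
        pair_mem_prodSet_iff.2
          ⟨hp, encode_mem_listSet_iff.2 fun b hb => hL b (by simp [hb])⟩⟩
    let z : RecCat.ofSet (prodSet B.carrier A.carrier) :=
      ⟨Nat.pair (happ h y) a, pair_mem_prodSet_iff.2 ⟨(hfun h y).2, hL a (by simp)⟩⟩
    have hy : happ h y = listRec f g x.val.unpair.1 L := by
      simpa [y] using ih y (by simp [y])
    rw [hh.2 x y z _ (encode L) a (by rw [cnc_encode]; exact hx) rfl rfl, ← extend_val,
      listRec_append_singleton, ← hy]

end ListRec

/-- The category `Rec` has parameterized list objects: for every object `A`, `List(A)`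
together with the empty-list morphism and the append morphism satisfies the universal
property of a parameterized list object. -/
theorem rec_parameterized_list_objects :
    ∀ A : RecCat,
      ∃ (emp : RecCat.ofSet {0} ⟶ RecCat.ofSet (listSet A.carrier))
        (cons : RecCat.ofSet (prodSet (listSet A.carrier) A.carrier) ⟶
          RecCat.ofSet (listSet A.carrier)),
        (∀ x, happ emp x = emptyCode) ∧
        (∀ x, happ cons x = cnc (Nat.unpair x.val).1 (Nat.unpair x.val).2) ∧
        ∀ (P B : RecCat) (f : P ⟶ B)
          (g : RecCat.ofSet (prodSet B.carrier A.carrier) ⟶ B),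
          ∃! h : RecCat.ofSet (prodSet P.carrier (listSet A.carrier)) ⟶ B,
            (∀ (x : RecCat.ofSet (prodSet P.carrier (listSet A.carrier))) (p : P),
              x.val = Nat.pair p.val emptyCode → happ h x = happ f p) ∧
            (∀ (x y : RecCat.ofSet (prodSet P.carrier (listSet A.carrier)))
               (z : RecCat.ofSet (prodSet B.carrier A.carrier)) (p l a : ℕ),
              x.val = Nat.pair p (cnc l a) → y.val = Nat.pair p l →
              z.val = Nat.pair (happ h y) a → happ h x = happ g z) := fun A =>
  ⟨emptyHom A, consHom A, fun _ => rfl, fun _ => rfl, fun _ _ f g =>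
    ⟨listRecHom f g, isListRec_listRecHom f g, fun _ hh => IsListRec.eq_listRecHom f g hh⟩⟩

end RecPaper
end

section
/- The Formal Church's Thesis is realized in the Kleene realizability doctrine: let R : ℕ → 𝒫(ℕ) be any function (a realized relation indexed by pair codes ⟨x,z⟩). If there exists e ∈ ℕ such that for every x ∈ ℕ, {e}(x) is defined and p₂({e}(x)) ∈ R(⟨x, p₁({e}(x))⟩), then there exist e' ∈ ℕ and c ∈ ℕ such that: for every x ∈ ℕ, {e'}(x) is defined, {c}(x) is defined, and {c}(x) ∈ R(⟨x, {e'}(x)⟩) (i.e. the choice function z = {e'}(x) is itself given by a Gödel code, uniformly realizing ∃e∀x∃y(T(e,x,y) ∧ R(x,U(y)))). -/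
namespace RecPaper

theorem kap_partrec (e : ℕ) : Nat.Partrec (kap e) :=
  Nat.Partrec.Code.exists_code.2 ⟨_, rfl⟩

theorem exists_kap_eq_map {g : ℕ → ℕ} (hg : Computable g) (e : ℕ) :
    ∃ c : ℕ, ∀ n, kap c n = (kap e n).map g := by
  have hmap : Nat.Partrec fun n => (kap e n).map g :=
    Partrec.nat_iff.1 <| (Partrec.nat_iff.2 (kap_partrec e)).map (hg.comp Computable.snd).to₂
  obtain ⟨c, hc⟩ := Nat.Partrec.Code.exists_code.1 hmap
  exact ⟨Encodable.encode c, fun n => by simp [kap, hc]⟩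

/-- The Formal Church's Thesis is realized in the Kleene realizability doctrine: if a
code uniformly picks, for every `x`, a value `z` together with a realizer of `R(⟨x,z⟩)`,
then there is a Gödel code `e'` computing such a choice function `z = {e'}(x)`, together
with a code uniformly realizing `R(⟨x, {e'}(x)⟩)`. -/
theorem formal_church_thesis_realized :
    ∀ R : ℕ → Set ℕ,
      (∃ e : ℕ, ∀ x : ℕ, ∃ v : ℕ, kap e x = Part.some v ∧
        (Nat.unpair v).2 ∈ R (Nat.pair x (Nat.unpair v).1)) →
      ∃ e' c : ℕ, ∀ x : ℕ, ∃ w : ℕ,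
        kap e' x = Part.some w ∧
        ∃ u : ℕ, kap c x = Part.some u ∧ u ∈ R (Nat.pair x w) := by
  rintro R ⟨e, he⟩
  obtain ⟨e', he'⟩ := exists_kap_eq_map (Computable.fst.comp Computable.unpair) e
  obtain ⟨c, hc⟩ := exists_kap_eq_map (Computable.snd.comp Computable.unpair) e
  refine ⟨e', c, fun x => ?_⟩
  obtain ⟨v, hv, hvR⟩ := he x
  exact ⟨(Nat.unpair v).1, by rw [he', hv, Part.map_some],
    (Nat.unpair v).2, by rw [hc, hv, Part.map_some], hvR⟩

end RecPaper
end
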